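/- Let Γ be a Coxeter graph, G a group of symmetries of Γ with all orbits of S finite, Φ the canonical root system of Γ, and ⟨·,·⟩ the canonical bilinear form. Suppose every root α ∈ Φ can be written w(α_s) with w ∈ W^G and s ∈ S, and suppose that whenever t = g(s) ≠ s for s,t ∈ S and g ∈ G one has m_{s,t} = 2. Then for any α, β ∈ Φ and g ∈ G with β = g(α) ≠ α, one has ⟨α, β⟩ = 0. -/

import Mathlib

open Real

/-- A Coxeter matrix on the set `S`, with `0` representing the label `∞`. -/
structure CoxeterMat (S : Type*) where
  m : S → S → ℕ
  diagonal : ∀ s, m s s = 1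
  symmetric : ∀ s t, m s t = m t s
  off_diagonal : ∀ s t, s ≠ t → m s t ≠ 1

namespace CoxeterMat

variable {S : Type*} (M : CoxeterMat S)

/-- The coefficient `⟨α_s, α_t⟩ = -2 cos (π / m_{s,t})`, with value `-2` when `m_{s,t} = ∞`. -/
noncomputable def c (s t : S) : ℝ :=
  if M.m s t = 0 then -2 else -2 * Real.cos (Real.pi / (M.m s t : ℝ))

/-- The simple root `α_s` in `V = ⊕_{s ∈ S} ℝ α_s`. -/
noncomputable def sroot (s : S) : S →₀ ℝ := Finsupp.single s 1

/-- The canonical bilinear form of the Coxeter graph. -/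
noncomputable def bform : (S →₀ ℝ) →ₗ[ℝ] (S →₀ ℝ) →ₗ[ℝ] ℝ :=
  Finsupp.lift _ ℝ S fun s => Finsupp.lift ℝ ℝ S fun t => M.c s t

/-- The simple reflection `σ_s : x ↦ x - ⟨α_s, x⟩ α_s`. -/
noncomputable def sigma (s : S) : (S →₀ ℝ) →ₗ[ℝ] (S →₀ ℝ) :=
  LinearMap.id - (M.bform (sroot s)).smulRight (sroot s)

/-- The Coxeter group `W`, realized as the subgroup of linear automorphisms of `V`
generated by the simple reflections. -/
noncomputable def Wgrp : Subgroup ((S →₀ ℝ) ≃ₗ[ℝ] (S →₀ ℝ)) :=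
  Subgroup.closure {w | ∃ s : S, (w : (S →₀ ℝ) →ₗ[ℝ] (S →₀ ℝ)) = M.sigma s}

/-- The canonical root system `Φ = {w(α_s) | w ∈ W, s ∈ S}`. -/
def Phi : Set (S →₀ ℝ) := {b | ∃ w ∈ M.Wgrp, ∃ s : S, b = w (sroot s)}

/-- The set of positive roots. -/
def PhiPos : Set (S →₀ ℝ) := {b | b ∈ M.Phi ∧ ∀ s, 0 ≤ b s}

/-- The equivalence relation `≡` on `Φ` generated by `α ≡₁ β ⟺ ⟨α, β⟩ ∉ {0, 1, -1}`. -/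
def equivR : (S →₀ ℝ) → (S →₀ ℝ) → Prop :=
  Relation.EqvGen (fun a b => a ∈ M.Phi ∧ b ∈ M.Phi ∧ M.bform a b ∉ ({0, 1, -1} : Set ℝ))

/-- The underlying graph of the Coxeter graph: `s` and `t` are joined iff `m_{s,t} ≥ 3`
(including `m_{s,t} = ∞`). -/
def graph : SimpleGraph S where
  Adj s t := s ≠ t ∧ M.m s t ≠ 2
  symm := ⟨fun s t h => ⟨h.1.symm, by rw [M.symmetric]; exact h.2⟩⟩
  loopless := ⟨fun s h => h.1 rfl⟩

/-- The action of a permutation of `S` on `V`. -/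
noncomputable def permV (g : Equiv.Perm S) : (S →₀ ℝ) ≃ₗ[ℝ] (S →₀ ℝ) :=
  Finsupp.domLCongr g

/-- The set of elements of `W` fixed by the group `G` of symmetries (acting by conjugation
by the corresponding permutations of coordinates). -/
noncomputable def WfixG (G : Subgroup (Equiv.Perm S)) :
    Set ((S →₀ ℝ) ≃ₗ[ℝ] (S →₀ ℝ)) :=
  {w | w ∈ M.Wgrp ∧ ∀ g ∈ G, permV g * w = w * permV g}

/-- Construct a simply laced Coxeter matrix from an adjacency relation. -/
noncomputable def ofAdj (A : S → S → Prop) (hs : ∀ s t, A s t → A t s)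
    (hi : ∀ s, ¬ A s s) : CoxeterMat S where
  m s t := open Classical in if s = t then 1 else if A s t then 3 else 2
  diagonal s := by simp
  symmetric s t := by
    classical
    by_cases h : s = t
    · subst h; rfl
    · have h' : t ≠ s := Ne.symm h
      simp only [if_neg h, if_neg h']
      by_cases hA : A s t
      · rw [if_pos hA, if_pos (hs s t hA)]
      · rw [if_neg hA, if_neg (fun h2 => hA (hs t s h2))]
  off_diagonal s t h := by
    classical
    simp only [if_neg h]
    split <;> norm_num

/-- Isomorphism of Coxeter graphs. -/
def Iso {T : Type*} (M : CoxeterMat S) (N : CoxeterMat T) : Prop :=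
  ∃ e : S ≃ T, ∀ s t, N.m (e s) (e t) = M.m s t

/-- The full Coxeter subgraph spanned by `Y ⊆ S`. -/
def restrict (Y : Set S) : CoxeterMat Y where
  m s t := M.m s t
  diagonal s := M.diagonal s
  symmetric s t := M.symmetric s t
  off_diagonal s t h := M.off_diagonal s t (fun hh => h (Subtype.ext hh))

end CoxeterMat

open CoxeterMat

/-- The Coxeter graph `A_n`: a path with `n` vertices. -/
noncomputable def pathA (n : ℕ) : CoxeterMat (Fin n) :=
  ofAdj (fun i j => i.val + 1 = j.val ∨ j.val + 1 = i.val)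
    (fun _ _ h => h.symm)
    (fun s h => by rcases h with h | h <;> omega)

/-- The Coxeter graph `D_n`: a path `0 — 1 — ⋯ — (n-2)` together with an extra vertex `n-1`
joined to `n-3`. -/
noncomputable def Dmat (n : ℕ) : CoxeterMat (Fin n) :=
  ofAdj (fun i j => i ≠ j ∧
      (((i.val + 1 = j.val ∧ j.val ≤ n - 2) ∨ (i.val + 2 = j.val ∧ j.val = n - 1)) ∨
       ((j.val + 1 = i.val ∧ i.val ≤ n - 2) ∨ (j.val + 2 = i.val ∧ i.val = n - 1))))
    (fun _ _ h => ⟨h.1.symm, h.2.symm⟩)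
    (fun s h => h.1 rfl)

/-- Adjacency relation determined by a list of edges. -/
def listAdj {n : ℕ} (L : List (Fin n × Fin n)) (i j : Fin n) : Prop :=
  (i, j) ∈ L ∨ (j, i) ∈ L

instance {n : ℕ} (L : List (Fin n × Fin n)) (i j : Fin n) : Decidable (listAdj L i j) := by
  unfold listAdj; infer_instance

/-- The Coxeter graph `E₆`. -/
noncomputable def E6mat : CoxeterMat (Fin 6) :=
  ofAdj (listAdj [(0,2),(2,3),(3,4),(4,5),(1,3)])
    (fun _ _ h => h.symm) (by decide)

/-- The Coxeter graph `E₇`. -/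
noncomputable def E7mat : CoxeterMat (Fin 7) :=
  ofAdj (listAdj [(0,2),(2,3),(3,4),(4,5),(5,6),(1,3)])
    (fun _ _ h => h.symm) (by decide)

/-- The Coxeter graph `E₈`. -/
noncomputable def E8mat : CoxeterMat (Fin 8) :=
  ofAdj (listAdj [(0,2),(2,3),(3,4),(4,5),(5,6),(6,7),(1,3)])
    (fun _ _ h => h.symm) (by decide)

/-- The Coxeter graph `A_∞`: the one-sided infinite path. -/
noncomputable def Ainf : CoxeterMat ℕ :=
  ofAdj (fun i j => i + 1 = j ∨ j + 1 = i)
    (fun _ _ h => h.symm)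
    (fun s h => by omega)

/-- The Coxeter graph `_∞A_∞`: the two-sided infinite path. -/
noncomputable def ZAinf : CoxeterMat ℤ :=
  ofAdj (fun i j => i + 1 = j ∨ j + 1 = i)
    (fun _ _ h => h.symm)
    (fun s h => by omega)

/-- The Coxeter graph `D_∞`: vertices `0, 1, 2, 3, …` with `0` and `1` joined to `2` and a
path `2 — 3 — 4 — ⋯`. -/
noncomputable def Dinf : CoxeterMat ℕ :=
  ofAdj (fun i j => i ≠ j ∧
      (((i = 0 ∧ j = 2) ∨ (i = 1 ∧ j = 2) ∨ (i + 1 = j ∧ 2 ≤ i)) ∨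
       ((j = 0 ∧ i = 2) ∨ (j = 1 ∧ i = 2) ∨ (j + 1 = i ∧ 2 ≤ j))))
    (fun _ _ h => ⟨h.1.symm, h.2.symm⟩)
    (fun s h => h.1 rfl)

/-- The affine Coxeter graph `Ã_n`: a cycle with `n + 1` vertices. -/
noncomputable def affA (n : ℕ) : CoxeterMat (ZMod (n + 1)) :=
  ofAdj (fun i j => i ≠ j ∧ (i + 1 = j ∨ j + 1 = i))
    (fun _ _ h => ⟨h.1.symm, h.2.symm⟩)
    (fun s h => h.1 rfl)

/-- The affine Coxeter graph `D̃_n` (on `n + 1` vertices, Bourbaki numbering): `0` and `1`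
joined to `2`, a path `2 — 3 — ⋯ — (n-1)`, and `n` joined to `n-2`. -/
noncomputable def affD (n : ℕ) : CoxeterMat (Fin (n + 1)) :=
  ofAdj (fun i j => i ≠ j ∧
      (((i.val = 0 ∧ j.val = 2) ∨ (i.val = 1 ∧ j.val = 2) ∨
        (i.val + 1 = j.val ∧ 2 ≤ i.val ∧ i.val ≤ n - 2) ∨
        (i.val = n - 2 ∧ j.val = n)) ∨
       ((j.val = 0 ∧ i.val = 2) ∨ (j.val = 1 ∧ i.val = 2) ∨
        (j.val + 1 = i.val ∧ 2 ≤ j.val ∧ j.val ≤ n - 2) ∨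
        (j.val = n - 2 ∧ i.val = n))))
    (fun _ _ h => ⟨h.1.symm, h.2.symm⟩)
    (fun s h => h.1 rfl)

/-- The affine Coxeter graph `Ẽ₆` (Bourbaki numbering, affine vertex `0`). -/
noncomputable def affE6 : CoxeterMat (Fin 7) :=
  ofAdj (listAdj [(1,3),(3,4),(4,5),(5,6),(2,4),(0,2)])
    (fun _ _ h => h.symm) (by decide)

/-- The affine Coxeter graph `Ẽ₇` (Bourbaki numbering, affine vertex `0`). -/
noncomputable def affE7 : CoxeterMat (Fin 8) :=
  ofAdj (listAdj [(0,1),(1,3),(3,4),(4,5),(5,6),(6,7),(2,4)])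
    (fun _ _ h => h.symm) (by decide)

/-- The affine Coxeter graph `Ẽ₈` (Bourbaki numbering, affine vertex `0`). -/
noncomputable def affE8 : CoxeterMat (Fin 9) :=
  ofAdj (listAdj [(1,3),(3,4),(4,5),(5,6),(6,7),(7,8),(2,4),(0,8)])
    (fun _ _ h => h.symm) (by decide)

/-!
Write `α = w(α_s)` with `w ∈ W^G`. Since `w` commutes with `g`, `β = g(α) = w(α_{g s})`, and the
`W`-invariance of the form gives `⟨α, β⟩ = ⟨α_s, α_{g s}⟩ = -2 cos (π / m_{s, g s})`, which
vanishes because `g s ≠ s` forces `m_{s, g s} = 2`.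
-/

theorem LinearMap.isOrthogonal_of_mem_closure {R V : Type*} [CommRing R] [AddCommGroup V]
    [Module R V] {B : LinearMap.BilinForm R V} {X : Set (V ≃ₗ[R] V)}
    (hX : ∀ w ∈ X, B.IsOrthogonal w) {w : V ≃ₗ[R] V} (hw : w ∈ Subgroup.closure X) :
    B.IsOrthogonal w := by
  induction hw using Subgroup.closure_induction with
  | mem w hw => exact hX w hw
  | one => exact fun _ _ => rfl
  | mul u v _ _ hu hv => exact fun x y => (hu (v x) (v y)).trans (hv x y)
  | inv u _ hu => exact fun x y => by simpa using (hu (u.symm x) (u.symm y)).symm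

namespace CoxeterMat

variable {S : Type*} (M : CoxeterMat S)

theorem c_comm (s t : S) : M.c s t = M.c t s := by
  rw [c, c, M.symmetric]

theorem c_self (s : S) : M.c s s = 2 := by
  simp [c, M.diagonal]

theorem c_eq_zero_of_m_eq_two {s t : S} (h : M.m s t = 2) : M.c s t = 0 := by
  simp [c, h]

theorem bform_sroot_sroot (s t : S) : M.bform (sroot s) (sroot t) = M.c s t := by
  simp [bform, sroot]

theorem bform_flip : M.bform.flip = M.bform := by
  ext s t
  simpa [bform] using M.c_comm t s

theorem bform_comm (x y : S →₀ ℝ) : M.bform x y = M.bform y x := by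
  rw [← LinearMap.flip_apply M.bform y x, bform_flip]

theorem isOrthogonal_sigma (s : S) : M.bform.IsOrthogonal (M.sigma s) := by
  intro x y
  simp only [sigma, LinearMap.sub_apply, LinearMap.id_apply, LinearMap.smulRight_apply, map_sub,
    map_smul, LinearMap.smul_apply, smul_eq_mul, bform_sroot_sroot, c_self, M.bform_comm x (sroot s)]
  ring

theorem isOrthogonal_of_mem_Wgrp {w : (S →₀ ℝ) ≃ₗ[ℝ] (S →₀ ℝ)} (hw : w ∈ M.Wgrp) :
    M.bform.IsOrthogonal w := by
  refine LinearMap.isOrthogonal_of_mem_closure ?_ hw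
  rintro w ⟨s, hs⟩
  simpa [← hs] using M.isOrthogonal_sigma s

theorem permV_sroot (g : Equiv.Perm S) (s : S) : permV g (sroot s) = sroot (g s) := by
  simp [permV, sroot]

theorem permV_apply_of_mem_WfixG {G : Subgroup (Equiv.Perm S)} {w : (S →₀ ℝ) ≃ₗ[ℝ] (S →₀ ℝ)}
    (hw : w ∈ M.WfixG G) {g : Equiv.Perm S} (hg : g ∈ G) (x : S →₀ ℝ) :
    permV g (w x) = w (permV g x) :=
  LinearEquiv.congr_fun (hw.2 g hg) x

end CoxeterMat

theorem stmt13_general {S : Type*} (M : CoxeterMat S) (G : Subgroup (Equiv.Perm S))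
    (hall : ∀ a ∈ M.Phi, ∃ w ∈ M.WfixG G, ∃ s : S, a = w (sroot s))
    (h2 : ∀ s t : S, ∀ g ∈ G, g s = t → t ≠ s → M.m s t = 2)
    (a b : S →₀ ℝ) (ha : a ∈ M.Phi)
    (g : Equiv.Perm S) (hg : g ∈ G) (hba : b = permV g a) (hne : b ≠ a) :
    M.bform a b = 0 := by
  obtain ⟨w, hw, s, rfl⟩ := hall a ha
  have hbw : b = w (sroot (g s)) := by
    rw [hba, M.permV_apply_of_mem_WfixG hw hg, permV_sroot]
  have hgs : g s ≠ s := fun h => hne (by rw [hbw, h])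
  rw [hbw, M.isOrthogonal_of_mem_Wgrp hw.1, bform_sroot_sroot]
  exact M.c_eq_zero_of_m_eq_two (h2 s (g s) g hg rfl hgs)

/-- Let `G` be a group of symmetries of `Γ` with all orbits of `S` finite, such that every
root is of the form `w(α_s)` with `w ∈ W^G`, and such that `m_{s,t} = 2` whenever
`t = g(s) ≠ s`. Then for all roots `α, β ∈ Φ` and `g ∈ G` with `β = g(α) ≠ α`, one has
`⟨α, β⟩ = 0`. -/
theorem stmt13 {S : Type*} (M : CoxeterMat S) (G : Subgroup (Equiv.Perm S))
    (hG : ∀ g ∈ G, ∀ s t, M.m (g s) (g t) = M.m s t)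
    (hfin : ∀ s : S, {t | ∃ g ∈ G, g s = t}.Finite)
    (hall : ∀ a ∈ M.Phi, ∃ w ∈ M.WfixG G, ∃ s : S, a = w (sroot s))
    (h2 : ∀ s t : S, ∀ g ∈ G, g s = t → t ≠ s → M.m s t = 2)
    (a b : S →₀ ℝ) (ha : a ∈ M.Phi) (hb : b ∈ M.Phi)
    (g : Equiv.Perm S) (hg : g ∈ G) (hba : b = permV g a) (hne : b ≠ a) :
    M.bform a b = 0 :=
  stmt13_general M G hall h2 a b ha g hg hba hne
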